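/- Let (P_1, ..., P_d, U = [[A, B], [C, D]]) be a GR-unitary colligation with transfer function S. Then for all z, w in the open unit polydisk D^d one has the dual Agler decomposition: I_E − S(z)^* S(w) = Σ_{k=1}^{d} (1 − conj(z_k) · w_k) · B^* ((I − A Z(z))^{-1})^* P_k (I − A Z(w))^{-1} B, an identity of bounded operators on E. -/

import Mathlib

open ContinuousLinearMap

noncomputable section

variable {d : ℕ} {H E F : Type*}
  [NormedAddCommGroup H] [InnerProductSpace ℂ H] [CompleteSpace H]
  [NormedAddCommGroup E] [InnerProductSpace ℂ E] [CompleteSpace E]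
  [NormedAddCommGroup F] [InnerProductSpace ℂ F] [CompleteSpace F]

/-- `Z(z) = z₁ P₁ + ⋯ + z_d P_d`. -/
def Zop (P : Fin d → H →L[ℂ] H) (z : Fin d → ℂ) : H →L[ℂ] H :=
  ∑ k, z k • P k

/-- The transfer function `S(z) = D + C (I - Z(z)A)⁻¹ Z(z) B` of a Givone–Roesser
colligation. -/
def transferFn (P : Fin d → H →L[ℂ] H) (A : H →L[ℂ] H) (B : E →L[ℂ] H)
    (C : H →L[ℂ] F) (D : E →L[ℂ] F) (z : Fin d → ℂ) : E →L[ℂ] F :=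
  D + C ∘L Ring.inverse (1 - Zop P z * A) ∘L (Zop P z ∘L B)

/-!
Put `X(v) := (I - A Z(v))⁻¹ B`. Then `X(v) = A Z(v) X(v) + B` and, by the push-through identity
`(I - Z A)⁻¹ Z = Z (I - A Z)⁻¹`, `S(v) = C Z(v) X(v) + D`: the colligation maps the column
`[Z(v) X(v); I]` to `[X(v); S(v)]`. Since `U*U = I`, the Gram operators of the two columns agree,
`X(z)* X(w) + S(z)* S(w) = X(z)* Z(z)* Z(w) X(w) + I`, and `I - Z(z)* Z(w) = ∑ₖ (1 - conj zₖ wₖ) Pₖ`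
because the `Pₖ` are orthogonal projections summing to `I`. The inverses exist since `‖A‖ ≤ 1`
and `‖Z(v)‖ ≤ maxₖ |vₖ| < 1`.
-/
theorem Ring.inverse_one_sub_mul_mul {R : Type*} [Ring R] {a b : R}
    (hab : IsUnit (1 - a * b)) (hba : IsUnit (1 - b * a)) :
    Ring.inverse (1 - a * b) * a = a * Ring.inverse (1 - b * a) :=
  calc Ring.inverse (1 - a * b) * a
      = Ring.inverse (1 - a * b) * (a * (1 - b * a)) * Ring.inverse (1 - b * a) := by
        rw [mul_assoc, mul_assoc, Ring.mul_inverse_cancel _ hba, mul_one]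
    _ = Ring.inverse (1 - a * b) * (1 - a * b) * (a * Ring.inverse (1 - b * a)) := by
        noncomm_ring
    _ = a * Ring.inverse (1 - b * a) := by rw [Ring.inverse_mul_cancel _ hab, one_mul]

theorem Ring.mul_inverse_one_sub_add_one {R : Type*} [Ring R] {a : R} (h : IsUnit (1 - a)) :
    a * Ring.inverse (1 - a) + 1 = Ring.inverse (1 - a) :=
  calc a * Ring.inverse (1 - a) + 1
      = a * Ring.inverse (1 - a) + (1 - a) * Ring.inverse (1 - a) := by
        rw [Ring.mul_inverse_cancel _ h]
    _ = Ring.inverse (1 - a) := by noncomm_ring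

section Colligation

variable {A : H →L[ℂ] H} {B : E →L[ℂ] H} {C : H →L[ℂ] F} {D : E →L[ℂ] F}

theorem norm_le_one_of_adjoint_mul_add_adjoint_comp_eq_one
    (hU4 : adjoint A * A + adjoint C ∘L C = 1) : ‖A‖ ≤ 1 := by
  refine opNorm_le_bound _ zero_le_one fun x => ?_
  have h : ‖A x‖ ^ 2 + ‖C x‖ ^ 2 = ‖x‖ ^ 2 := by
    rw [apply_norm_sq_eq_inner_adjoint_left, apply_norm_sq_eq_inner_adjoint_left,
      ← map_add, ← inner_add_left, ← add_apply, ← mul_def, hU4, one_apply_eq_self,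
      norm_sq_eq_re_inner (𝕜 := ℂ)]
  rw [one_mul, ← pow_le_pow_iff_left₀ (norm_nonneg _) (norm_nonneg _) two_ne_zero]
  nlinarith [sq_nonneg ‖C x‖]

theorem adjoint_comp_add_adjoint_comp_eq_of_isometry
    (hU4 : adjoint A * A + adjoint C ∘L C = 1) (hU5 : adjoint A ∘L B + adjoint C ∘L D = 0)
    (hU6 : adjoint B ∘L B + adjoint D ∘L D = 1) (T₁ T₂ : E →L[ℂ] H) :
    adjoint (A ∘L T₁ + B) ∘L (A ∘L T₂ + B) + adjoint (C ∘L T₁ + D) ∘L (C ∘L T₂ + D)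
      = adjoint T₁ ∘L T₂ + 1 := by
  have hU5' : adjoint B ∘L A + adjoint D ∘L C = 0 := by
    simpa [adjoint_comp] using congrArg adjoint hU5
  calc _ = adjoint T₁ ∘L (adjoint A * A + adjoint C ∘L C) ∘L T₂
        + adjoint T₁ ∘L (adjoint A ∘L B + adjoint C ∘L D)
        + (adjoint B ∘L A + adjoint D ∘L C) ∘L T₂ + (adjoint B ∘L B + adjoint D ∘L D) := by
        simp only [map_add, adjoint_comp, add_comp, comp_add, comp_assoc, mul_def]
        abel
    _ = adjoint T₁ ∘L T₂ + 1 := by simp [hU4, hU5, hU5', hU6, one_def]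

end Colligation

section ZopAlgebra

variable {V : Type*} [NormedAddCommGroup V] [InnerProductSpace ℂ V] {P : Fin d → V →L[ℂ] V}

theorem Zop_sub (z w : Fin d → ℂ) : Zop P (z - w) = Zop P z - Zop P w := by
  simp [Zop, sub_smul, Finset.sum_sub_distrib]

theorem Zop_one (hPsum : ∑ k, P k = 1) : Zop P 1 = 1 := by
  simp [Zop, hPsum]

theorem Zop_mul_Zop (hPidem : ∀ k, P k * P k = P k) (hPorth : ∀ j k, j ≠ k → P j * P k = 0)
    (z w : Fin d → ℂ) : Zop P z * Zop P w = Zop P (z * w) := by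
  have hPP : ∀ j k, P j * P k = if j = k then P j else 0 := fun j k => by
    split_ifs with h
    · rw [h, hPidem]
    · exact hPorth j k h
  simp [Zop, Finset.sum_mul, Finset.mul_sum, hPP, smul_smul, mul_comm]

end ZopAlgebra

section Zop

variable {P : Fin d → H →L[ℂ] H}

theorem adjoint_Zop (hPsa : ∀ k, IsSelfAdjoint (P k)) (z : Fin d → ℂ) :
    adjoint (Zop P z) = Zop P (star z) := by
  simp [Zop, ← star_eq_adjoint, star_smul, fun k => (hPsa k).star_eq]

theorem one_sub_adjoint_Zop_mul_Zop (hPsa : ∀ k, IsSelfAdjoint (P k))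
    (hPidem : ∀ k, P k * P k = P k) (hPorth : ∀ j k, j ≠ k → P j * P k = 0)
    (hPsum : ∑ k, P k = 1) (z w : Fin d → ℂ) :
    1 - adjoint (Zop P z) * Zop P w = ∑ k, (1 - starRingEnd ℂ (z k) * w k) • P k := by
  rw [adjoint_Zop hPsa, Zop_mul_Zop hPidem hPorth, ← Zop_one hPsum, ← Zop_sub]
  rfl

theorem norm_Zop_apply_sq (hPsa : ∀ k, IsSelfAdjoint (P k)) (hPidem : ∀ k, P k * P k = P k)
    (hPorth : ∀ j k, j ≠ k → P j * P k = 0) (z : Fin d → ℂ) (x : H) :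
    ‖Zop P z x‖ ^ 2 = ∑ k, ‖z k‖ ^ 2 * ‖P k x‖ ^ 2 := by
  have hPk : ∀ k, inner ℂ (P k x) x = (‖P k x‖ ^ 2 : ℂ) := fun k => by
    calc inner ℂ (P k x) x = inner ℂ (P k (P k x)) x := by
          rw [← mul_apply_eq_comp, hPidem]
      _ = (‖P k x‖ ^ 2 : ℂ) := by
          rw [← (hPsa k).adjoint_eq, adjoint_inner_left, (hPsa k).adjoint_eq]
          exact inner_self_eq_norm_sq_to_K _
  have hinner : inner ℂ (Zop P (star z * z) x) x = ((∑ k, ‖z k‖ ^ 2 * ‖P k x‖ ^ 2 : ℝ) : ℂ) := by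
    simp [Zop, hPk, RCLike.mul_conj, mul_comm]
  rw [apply_norm_sq_eq_inner_adjoint_left, ← mul_def, adjoint_Zop hPsa, Zop_mul_Zop hPidem hPorth,
    hinner]
  exact Complex.ofReal_re _

theorem norm_Zop_le (hPsa : ∀ k, IsSelfAdjoint (P k)) (hPidem : ∀ k, P k * P k = P k)
    (hPorth : ∀ j k, j ≠ k → P j * P k = 0) (hPsum : ∑ k, P k = 1) {z : Fin d → ℂ} {c : ℝ}
    (hc : 0 ≤ c) (hz : ∀ k, ‖z k‖ ≤ c) : ‖Zop P z‖ ≤ c := by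
  refine opNorm_le_bound _ hc fun x => ?_
  have hx : ‖x‖ ^ 2 = ∑ k, ‖P k x‖ ^ 2 := by
    simpa [Zop_one hPsum] using norm_Zop_apply_sq hPsa hPidem hPorth 1 x
  rw [← pow_le_pow_iff_left₀ (norm_nonneg _) (by positivity) two_ne_zero, mul_pow, hx,
    Finset.mul_sum, norm_Zop_apply_sq hPsa hPidem hPorth]
  gcongr with k
  exact hz k

theorem norm_Zop_lt_one (hPsa : ∀ k, IsSelfAdjoint (P k)) (hPidem : ∀ k, P k * P k = P k)
    (hPorth : ∀ j k, j ≠ k → P j * P k = 0) (hPsum : ∑ k, P k = 1) {z : Fin d → ℂ}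
    (hz : ∀ k, ‖z k‖ < 1) : ‖Zop P z‖ < 1 := by
  have hc : Finset.univ.sup (fun k => ‖z k‖₊) < 1 := (Finset.sup_lt_iff one_pos).2 fun k _ => hz k
  exact (norm_Zop_le hPsa hPidem hPorth hPsum (NNReal.coe_nonneg _)
    fun k => Finset.le_sup (f := fun k => ‖z k‖₊) (Finset.mem_univ k)).trans_lt hc

end Zop

theorem one_sub_adjoint_transferFn_comp_transferFn {P : Fin d → H →L[ℂ] H} {A : H →L[ℂ] H}
    {B : E →L[ℂ] H} {C : H →L[ℂ] F} {D : E →L[ℂ] F} {z w : Fin d → ℂ}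
    (hU4 : adjoint A * A + adjoint C ∘L C = 1)
    (hU5 : adjoint A ∘L B + adjoint C ∘L D = 0) (hU6 : adjoint B ∘L B + adjoint D ∘L D = 1)
    (hAZ : IsUnit (1 - A * Zop P z)) (hZA : IsUnit (1 - Zop P z * A))
    (hAW : IsUnit (1 - A * Zop P w)) (hWA : IsUnit (1 - Zop P w * A)) :
    1 - adjoint (transferFn P A B C D z) ∘L transferFn P A B C D w
      = adjoint (Ring.inverse (1 - A * Zop P z) ∘L B) ∘L
          ((1 - adjoint (Zop P z) * Zop P w) ∘L (Ring.inverse (1 - A * Zop P w) ∘L B)) := by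
  have hstate : ∀ {v}, IsUnit (1 - A * Zop P v) →
      A ∘L (Zop P v ∘L (Ring.inverse (1 - A * Zop P v) ∘L B)) + B
        = Ring.inverse (1 - A * Zop P v) ∘L B := fun hAV => by
    conv_rhs => rw [← Ring.mul_inverse_one_sub_add_one hAV]
    simp only [add_comp, mul_def, comp_assoc, one_def, id_comp]
  have houtput : ∀ {v}, IsUnit (1 - A * Zop P v) → IsUnit (1 - Zop P v * A) →
      C ∘L (Zop P v ∘L (Ring.inverse (1 - A * Zop P v) ∘L B)) + D
        = transferFn P A B C D v := fun hAV hVA => by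
    rw [transferFn, add_comm, ← comp_assoc (Ring.inverse _), ← mul_def,
      Ring.inverse_one_sub_mul_mul hVA hAV]
    rfl
  have hgram := adjoint_comp_add_adjoint_comp_eq_of_isometry hU4 hU5 hU6
    (Zop P z ∘L (Ring.inverse (1 - A * Zop P z) ∘L B))
    (Zop P w ∘L (Ring.inverse (1 - A * Zop P w) ∘L B))
  rw [hstate hAZ, hstate hAW, houtput hAZ hZA, houtput hAW hWA] at hgram
  rw [eq_sub_of_add_eq' hgram]
  simp only [sub_comp, comp_sub, adjoint_comp, comp_assoc, mul_def, one_def, id_comp]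
  abel

theorem dual_agler_decomposition_of_GR_unitary_colligation_general
    (P : Fin d → H →L[ℂ] H)
    (hPsa : ∀ k, IsSelfAdjoint (P k))
    (hPidem : ∀ k, P k * P k = P k)
    (hPorth : ∀ j k, j ≠ k → P j * P k = 0)
    (hPsum : ∑ k, P k = 1)
    (A : H →L[ℂ] H) (B : E →L[ℂ] H) (C : H →L[ℂ] F) (D : E →L[ℂ] F)
    (hU4 : adjoint A * A + adjoint C ∘L C = 1)
    (hU5 : adjoint A ∘L B + adjoint C ∘L D = 0)
    (hU6 : adjoint B ∘L B + adjoint D ∘L D = 1)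
    (z w : Fin d → ℂ) (hz : ∀ k, ‖z k‖ < 1) (hw : ∀ k, ‖w k‖ < 1) :
    (1 : E →L[ℂ] E) - adjoint (transferFn P A B C D z) ∘L transferFn P A B C D w
      = ∑ k, (1 - (starRingEnd ℂ) (z k) * w k) •
          (adjoint B ∘L adjoint (Ring.inverse (1 - A * Zop P z)) ∘L P k ∘L
            Ring.inverse (1 - A * Zop P w) ∘L B) := by
  have hA : ‖A‖ ≤ 1 := norm_le_one_of_adjoint_mul_add_adjoint_comp_eq_one hU4
  have hunits : ∀ {v : Fin d → ℂ}, (∀ k, ‖v k‖ < 1) →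
      IsUnit (1 - A * Zop P v) ∧ IsUnit (1 - Zop P v * A) := fun hv => by
    have hV := norm_Zop_lt_one hPsa hPidem hPorth hPsum hv
    exact ⟨isUnit_one_sub_of_norm_lt_one <| (norm_mul_le _ _).trans_lt <|
        mul_lt_one_of_nonneg_of_lt_one_right hA (norm_nonneg _) hV,
      isUnit_one_sub_of_norm_lt_one <| (norm_mul_le _ _).trans_lt <|
        mul_lt_one_of_nonneg_of_lt_one_left (norm_nonneg _) hV hA⟩
  obtain ⟨hAZ, hZA⟩ := hunits hz
  obtain ⟨hAW, hWA⟩ := hunits hw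
  rw [one_sub_adjoint_transferFn_comp_transferFn hU4 hU5 hU6 hAZ hZA hAW hWA,
    one_sub_adjoint_Zop_mul_Zop hPsa hPidem hPorth hPsum, adjoint_comp]
  simp only [finsetSum_comp, comp_finsetSum, smul_comp, comp_smul, comp_assoc]

/-- **Dual Agler decomposition for a GR-unitary colligation.**
`I - S(z)* S(w) = ∑ₖ (1 - conj(zₖ) wₖ) B* ((I - A Z(z))⁻¹)* Pₖ (I - A Z(w))⁻¹ B`
for `z, w` in the open unit polydisk. -/
theorem dual_agler_decomposition_of_GR_unitary_colligation
    (hd : 0 < d)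
    (P : Fin d → H →L[ℂ] H)
    (hPsa : ∀ k, IsSelfAdjoint (P k))
    (hPidem : ∀ k, P k * P k = P k)
    (hPorth : ∀ j k, j ≠ k → P j * P k = 0)
    (hPsum : ∑ k, P k = 1)
    (A : H →L[ℂ] H) (B : E →L[ℂ] H) (C : H →L[ℂ] F) (D : E →L[ℂ] F)
    (hU1 : A * adjoint A + B ∘L adjoint B = 1)
    (hU2 : A ∘L adjoint C + B ∘L adjoint D = 0)
    (hU3 : C ∘L adjoint C + D ∘L adjoint D = 1)
    (hU4 : adjoint A * A + adjoint C ∘L C = 1)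
    (hU5 : adjoint A ∘L B + adjoint C ∘L D = 0)
    (hU6 : adjoint B ∘L B + adjoint D ∘L D = 1)
    (z w : Fin d → ℂ) (hz : ∀ k, ‖z k‖ < 1) (hw : ∀ k, ‖w k‖ < 1) :
    (1 : E →L[ℂ] E) - adjoint (transferFn P A B C D z) ∘L transferFn P A B C D w
      = ∑ k, (1 - (starRingEnd ℂ) (z k) * w k) •
          (adjoint B ∘L adjoint (Ring.inverse (1 - A * Zop P z)) ∘L P k ∘L
            Ring.inverse (1 - A * Zop P w) ∘L B) :=
  dual_agler_decomposition_of_GR_unitary_colligation_general P hPsa hPidem hPorth hPsum A B C D hU4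
    hU5 hU6 z w hz hw
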